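/- arXiv:2602.17731 — 3 statements merged into one kernel-verified Lean document; each statement's English description precedes it below -/
import Mathlib

section
/- Let A = (0, 0, π), B = (π, 0, 0), C = (0, π, 0), P = (0, π/2, π/2), Q = (π/2, 0, π/2), and R = (π/2, π/2, 0) in ℝ³. Then the set {(x, y, z) ∈ ℝ³ : x > 0, y > 0, z > 0, x + y + z = π, and (x > π/2 or y > π/2 or z > π/2)} equals the union of the three open triangular regions with vertex sets {A, P, Q}, {B, Q, R}, and {C, P, R}. That is, the angle triples of obtuse-angled triangles form exactly the union of these three open triangles. -/
open Real

theorem obtuse_angle_triples_eq_union_of_open_triangles :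
    {p : ℝ × ℝ × ℝ | 0 < p.1 ∧ 0 < p.2.1 ∧ 0 < p.2.2 ∧
        p.1 + p.2.1 + p.2.2 = π ∧
        (p.1 > π / 2 ∨ p.2.1 > π / 2 ∨ p.2.2 > π / 2)} =
      {p : ℝ × ℝ × ℝ | ∃ α β γ : ℝ, 0 < α ∧ 0 < β ∧ 0 < γ ∧ α + β + γ = 1 ∧
        p = α • (((0 : ℝ), (0 : ℝ), π) : ℝ × ℝ × ℝ) +
            β • (((0 : ℝ), π / 2, π / 2) : ℝ × ℝ × ℝ) +
            γ • ((π / 2, (0 : ℝ), π / 2) : ℝ × ℝ × ℝ)} ∪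
      {p : ℝ × ℝ × ℝ | ∃ α β γ : ℝ, 0 < α ∧ 0 < β ∧ 0 < γ ∧ α + β + γ = 1 ∧
        p = α • ((π, (0 : ℝ), (0 : ℝ)) : ℝ × ℝ × ℝ) +
            β • ((π / 2, (0 : ℝ), π / 2) : ℝ × ℝ × ℝ) +
            γ • ((π / 2, π / 2, (0 : ℝ)) : ℝ × ℝ × ℝ)} ∪
      {p : ℝ × ℝ × ℝ | ∃ α β γ : ℝ, 0 < α ∧ 0 < β ∧ 0 < γ ∧ α + β + γ = 1 ∧
        p = α • (((0 : ℝ), π, (0 : ℝ)) : ℝ × ℝ × ℝ) +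
            β • (((0 : ℝ), π / 2, π / 2) : ℝ × ℝ × ℝ) +
            γ • ((π / 2, π / 2, (0 : ℝ)) : ℝ × ℝ × ℝ)} := by
  have hpi := Real.pi_pos
  ext ⟨x, y, z⟩
  simp only [Set.mem_setOf_eq, Set.mem_union, Prod.smul_mk, Prod.mk_add_mk,
    smul_eq_mul, Prod.mk.injEq]
  constructor
  · rintro ⟨hx, hy, hz, hsum, h | h | h⟩
    · refine Or.inl (Or.inr ⟨2 * x / π - 1, 2 * z / π, 2 * y / π, ?_, ?_, ?_, ?_, ?_, ?_, ?_⟩)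
      · rw [sub_pos, lt_div_iff₀ hpi]; linarith
      · positivity
      · positivity
      · field_simp; linarith
      · field_simp; linarith
      · field_simp; ring
      · field_simp; ring
    · refine Or.inr ⟨2 * y / π - 1, 2 * z / π, 2 * x / π, ?_, ?_, ?_, ?_, ?_, ?_, ?_⟩
      · rw [sub_pos, lt_div_iff₀ hpi]; linarith
      · positivity
      · positivity
      · field_simp; linarith
      · field_simp; ring
      · field_simp; linarith
      · field_simp; ring
    · refine Or.inl (Or.inl ⟨2 * z / π - 1, 2 * y / π, 2 * x / π, ?_, ?_, ?_, ?_, ?_, ?_, ?_⟩)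
      · rw [sub_pos, lt_div_iff₀ hpi]; linarith
      · positivity
      · positivity
      · field_simp; linarith
      · field_simp; ring
      · field_simp; ring
      · field_simp; linarith
  · rintro ((⟨a, b, c, ha, hb, hc, hs, h1, h2, h3⟩ | ⟨a, b, c, ha, hb, hc, hs, h1, h2, h3⟩) |
      ⟨a, b, c, ha, hb, hc, hs, h1, h2, h3⟩)
    · refine ⟨?_, ?_, ?_, ?_, Or.inr (Or.inr ?_)⟩ <;> subst h1 h2 h3 <;> nlinarith
    · refine ⟨?_, ?_, ?_, ?_, Or.inl ?_⟩ <;> subst h1 h2 h3 <;> nlinarith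
    · refine ⟨?_, ?_, ?_, ?_, Or.inr (Or.inl ?_)⟩ <;> subst h1 h2 h3 <;> nlinarith
end

section
/- The region {(x, y) ∈ ℝ² : 0 < x, x ≤ y, y ≤ 1, x + y > 1, x² + y² < 1}, which in the Dhar–Sinha representation consists of the points representing equivalence classes of obtuse-angled triangles, has 2-dimensional Lebesgue measure (π − 2)/8. -/
open Real MeasureTheory Set

lemma sqrt_int : ∫ x in (0:ℝ)..1, Real.sqrt (1 - x ^ 2) = π / 4 := by
  have hc : Continuous fun x : ℝ => Real.sqrt (1 - x ^ 2) :=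
    (continuous_const.sub (continuous_pow 2)).sqrt
  have h1 : ∫ x in (-1:ℝ)..0, Real.sqrt (1 - x ^ 2) = ∫ x in (0:ℝ)..1, Real.sqrt (1 - x ^ 2) := by
    have h := intervalIntegral.integral_comp_neg (a := (0:ℝ)) (b := 1)
      (f := fun x : ℝ => Real.sqrt (1 - x ^ 2))
    simp only [neg_zero, neg_sq] at h
    exact h.symm
  have h2 : (∫ x in (-1:ℝ)..0, Real.sqrt (1 - x ^ 2)) + ∫ x in (0:ℝ)..1, Real.sqrt (1 - x ^ 2)
      = π / 2 := by
    rw [intervalIntegral.integral_add_adjacent_intervals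
      (hc.intervalIntegrable _ _) (hc.intervalIntegrable _ _)]
    exact integral_sqrt_one_sub_sq
  rw [h1] at h2
  linarith

lemma segment_area :
    volume {p : ℝ × ℝ | p.1 + p.2 > 1 ∧ p.1 ^ 2 + p.2 ^ 2 < 1}
      = ENNReal.ofReal (π / 4 - 1 / 2) := by
  have hreg : {p : ℝ × ℝ | p.1 + p.2 > 1 ∧ p.1 ^ 2 + p.2 ^ 2 < 1}
      = regionBetween (fun x => 1 - x) (fun x => Real.sqrt (1 - x ^ 2)) (Ioo 0 1) := by
    ext ⟨x, y⟩
    simp only [regionBetween, mem_setOf_eq, mem_Ioo]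
    constructor
    · rintro ⟨h1, h2⟩
      have hy1 : y < 1 := by nlinarith [sq_nonneg x, sq_nonneg y]
      have hx0 : 0 < x := by linarith
      have hx1 : x < 1 := by nlinarith
      have hylb : 1 - x < y := by linarith
      have hy0 : 0 < y := by linarith
      refine ⟨⟨hx0, hx1⟩, hylb, ?_⟩
      have : y ^ 2 < 1 - x ^ 2 := by linarith
      calc y = Real.sqrt (y ^ 2) := by rw [Real.sqrt_sq hy0.le]
      _ < Real.sqrt (1 - x ^ 2) := by
          exact Real.sqrt_lt_sqrt (by positivity) this
    · rintro ⟨⟨hx0, hx1⟩, hylb, hyub⟩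
      have h1 : x + y > 1 := by linarith
      have hy0 : 0 < y := by nlinarith
      have : y ^ 2 < 1 - x ^ 2 := by
        have := Real.sq_sqrt (by nlinarith : (0:ℝ) ≤ 1 - x ^ 2)
        nlinarith [Real.sqrt_nonneg (1 - x ^ 2)]
      exact ⟨h1, by nlinarith⟩
  have hc : Continuous fun x : ℝ => Real.sqrt (1 - x ^ 2) :=
    (continuous_const.sub (continuous_pow 2)).sqrt
  have hfint : IntegrableOn (fun x : ℝ => 1 - x) (Ioo 0 1) volume :=
    ((continuous_const.sub continuous_id).continuousOn.integrableOn_compact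
      (isCompact_Icc (a := (0:ℝ)) (b := 1))).mono_set Ioo_subset_Icc_self
  have hgint : IntegrableOn (fun x : ℝ => Real.sqrt (1 - x ^ 2)) (Ioo 0 1) volume :=
    (hc.continuousOn.integrableOn_compact (isCompact_Icc (a := (0:ℝ)) (b := 1))).mono_set
      Ioo_subset_Icc_self
  have hle : ∀ x ∈ Ioo (0:ℝ) 1, 1 - x ≤ Real.sqrt (1 - x ^ 2) := fun x hx => by
    have hx0 : (0:ℝ) < x := hx.1
    have hx1 : x < 1 := hx.2
    rw [show (1:ℝ) - x = Real.sqrt ((1 - x) ^ 2) from (Real.sqrt_sq (by linarith)).symm]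
    exact Real.sqrt_le_sqrt (by nlinarith)
  rw [hreg, Measure.volume_eq_prod ℝ ℝ,
    volume_regionBetween_eq_integral hfint hgint measurableSet_Ioo hle]
  congr 1
  have heq : ((fun x => Real.sqrt (1 - x ^ 2)) - fun x : ℝ => 1 - x)
      = fun y : ℝ => Real.sqrt (1 - y ^ 2) - (1 - y) := rfl
  rw [heq, ← MeasureTheory.integral_Ioc_eq_integral_Ioo,
    ← intervalIntegral.integral_of_le zero_le_one,
    intervalIntegral.integral_sub (hc.intervalIntegrable _ _)
    (((by continuity : Continuous fun x : ℝ => 1 - x)).intervalIntegrable _ _), sqrt_int]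
  have : ∫ y in (0:ℝ)..1, (1 - y) = 1 / 2 := by
    simp [intervalIntegral.integral_sub intervalIntegrable_const
      (intervalIntegral.intervalIntegrable_id)]
    norm_num
  rw [this]

theorem dhar_sinha_obtuse_region_area :
    volume {p : ℝ × ℝ | 0 < p.1 ∧ p.1 ≤ p.2 ∧ p.2 ≤ 1 ∧ p.1 + p.2 > 1 ∧
        p.1 ^ 2 + p.2 ^ 2 < 1} = ENNReal.ofReal ((π - 2) / 8) := by
  set S : Set (ℝ × ℝ) := {p | p.1 + p.2 > 1 ∧ p.1 ^ 2 + p.2 ^ 2 < 1} with hS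
  set A : Set (ℝ × ℝ) := S ∩ {p | p.1 ≤ p.2} with hA
  set B : Set (ℝ × ℝ) := S ∩ {p | p.2 ≤ p.1} with hB
  -- target set equals A
  have htarget : {p : ℝ × ℝ | 0 < p.1 ∧ p.1 ≤ p.2 ∧ p.2 ≤ 1 ∧ p.1 + p.2 > 1 ∧
      p.1 ^ 2 + p.2 ^ 2 < 1} = A := by
    ext ⟨x, y⟩
    simp only [hA, hS, mem_setOf_eq, mem_inter_iff]
    constructor
    · rintro ⟨_, h2, _, h4, h5⟩; exact ⟨⟨h4, h5⟩, h2⟩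
    · rintro ⟨⟨h4, h5⟩, h2⟩
      have hy1 : y < 1 := by nlinarith
      have hx1 : x < 1 := by nlinarith
      exact ⟨by linarith, h2, hy1.le, h4, h5⟩
  -- B is swap of A
  have hswap : B = Prod.swap ⁻¹' A := by
    ext ⟨x, y⟩
    simp only [hA, hB, hS, mem_preimage, Prod.swap_prod_mk, mem_inter_iff, mem_setOf_eq]
    constructor
    · rintro ⟨⟨h1, h2⟩, h3⟩; exact ⟨⟨by linarith, by linarith⟩, h3⟩
    · rintro ⟨⟨h1, h2⟩, h3⟩; exact ⟨⟨by linarith, by linarith⟩, h3⟩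
  have hSmeas : MeasurableSet S := by
    apply MeasurableSet.inter
    · exact measurableSet_lt measurable_const (measurable_fst.add measurable_snd)
    · exact measurableSet_lt (measurable_fst.pow_const 2 |>.add
        (measurable_snd.pow_const 2)) measurable_const
  have hAmeas : MeasurableSet A :=
    hSmeas.inter (measurableSet_le measurable_fst measurable_snd)
  have hBmeas : MeasurableSet B :=
    hSmeas.inter (measurableSet_le measurable_snd measurable_fst)
  have hvolB : volume B = volume A := by
    rw [hswap, Measure.volume_eq_prod ℝ ℝ,
      (Measure.measurePreserving_swap (μ := (volume : Measure ℝ)) (ν := volume)).measure_preimage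
        (by rw [← Measure.volume_eq_prod ℝ ℝ]; exact hAmeas.nullMeasurableSet),
      ← Measure.volume_eq_prod ℝ ℝ]
  have hdiag : volume (A ∩ B) = 0 := by
    have hsub : A ∩ B ⊆ {p : ℝ × ℝ | p.1 = p.2} := by
      rintro ⟨x, y⟩ ⟨⟨_, h1⟩, _, h2⟩
      exact le_antisymm h1 h2
    refine measure_mono_null hsub ?_
    have hmeas : MeasurableSet {p : ℝ × ℝ | p.1 = p.2} :=
      measurableSet_eq_fun measurable_fst measurable_snd
    rw [Measure.volume_eq_prod ℝ ℝ, Measure.measure_prod_null hmeas]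
    filter_upwards with x
    have : Prod.mk x ⁻¹' {p : ℝ × ℝ | p.1 = p.2} = {x} := by
      ext y; simp [eq_comm]
    simp only [Pi.zero_apply]
    rw [this]
    exact measure_singleton x
  have hunion : A ∪ B = S := by
    ext ⟨x, y⟩
    simp only [hA, hB, mem_union, mem_inter_iff, mem_setOf_eq]
    constructor
    · rintro (⟨h, _⟩ | ⟨h, _⟩) <;> exact h
    · intro h; rcases le_total x y with h' | h'
      · exact Or.inl ⟨h, h'⟩
      · exact Or.inr ⟨h, h'⟩
  have hadd : volume A + volume B = volume S + volume (A ∩ B) := by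
    rw [← hunion]
    exact (measure_union_add_inter' hAmeas B).symm
  rw [hvolB, hdiag, add_zero, segment_area] at hadd
  have h2 : (2 : ENNReal) * volume A = ENNReal.ofReal (π / 4 - 1 / 2) := by
    rw [two_mul]; exact hadd
  have hfin : volume A ≠ ⊤ := by
    intro h
    rw [h] at h2
    simp [ENNReal.mul_top] at h2
  rw [htarget]
  have : ENNReal.ofReal (π / 4 - 1 / 2) = 2 * ENNReal.ofReal ((π - 2) / 8) := by
    rw [← ENNReal.ofReal_ofNat, ← ENNReal.ofReal_mul (by norm_num)]
    congr 1
    ring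
  rw [this] at h2
  exact (ENNReal.mul_right_inj (a := (2:ENNReal)) (by norm_num) (by norm_num)).mp h2
end

section
/- The region {(x, y) ∈ ℝ² : 0 < x, x ≤ y, y ≤ 1, x² + y² > 1}, which in the Dhar–Sinha representation consists of the points representing equivalence classes of acute-angled triangles, has 2-dimensional Lebesgue measure (4 − π)/8. In particular its measure is strictly smaller than the measure (π − 2)/8 of the obtuse region, so in this representation too the proportion of obtuse-angled triangles exceeds that of acute-angled triangles. -/
/-!
Slice the region horizontally: at height `y` its section is the interval `(√(1 - y²), y]`,
which is nonempty exactly for `√2/2 < y ≤ 1`. Hence the area is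
`∫_{√2/2}^1 (y - √(1 - y²)) dy = 1/4 - (π/8 - 1/4)`, the substitution `y = sin θ` turning the
integral of `√(1 - y²)` into `∫_{π/4}^{π/2} cos² θ dθ`.
-/

open Real MeasureTheory Set

theorem volume_setOf_fst_mem_Ioc {s : Set ℝ} {f g : ℝ → ℝ} (hs : MeasurableSet s)
    (hf : Measurable f) (hg : Measurable g) :
    volume {p : ℝ × ℝ | p.2 ∈ s ∧ p.1 ∈ Ioc (f p.2) (g p.2)} =
      ∫⁻ y in s, ENNReal.ofReal (g y - f y) := by
  have hmeas : MeasurableSet {p : ℝ × ℝ | p.2 ∈ s ∧ p.1 ∈ Ioc (f p.2) (g p.2)} :=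
    (measurable_snd hs).inter <| (measurableSet_lt (hf.comp measurable_snd) measurable_fst).inter
      (measurableSet_le measurable_fst (hg.comp measurable_snd))
  rw [Measure.volume_eq_prod, Measure.prod_apply_symm hmeas, ← lintegral_indicator hs]
  congr 1 with y
  by_cases hy : y ∈ s
  · rw [indicator_of_mem hy, ← Real.volume_Ioc]
    congr 1 with x
    simp [hy]
  · simp [hy]

theorem integral_sqrt_one_sub_sq_sin {a b : ℝ} (ha : a ∈ Icc (-(π / 2)) (π / 2))
    (hb : b ∈ Icc (-(π / 2)) (π / 2)) :
    ∫ x in sin a..sin b, √(1 - x ^ 2) = (b - a + cos b * sin b - cos a * sin a) / 2 := by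
  calc ∫ x in sin a..sin b, √(1 - x ^ 2)
      = ∫ θ in a..b, √(1 - sin θ ^ 2) * cos θ :=
        (intervalIntegral.integral_comp_mul_deriv (fun θ _ => hasDerivAt_sin θ) continuousOn_cos
          (by fun_prop)).symm
    _ = ∫ θ in a..b, cos θ ^ 2 := by
        refine intervalIntegral.integral_congr fun θ hθ => ?_
        have hθ' : θ ∈ Icc (-(π / 2)) (π / 2) := ordConnected_Icc.uIcc_subset ha hb hθ
        rw [← cos_eq_sqrt_one_sub_sin_sq hθ'.1 hθ'.2, sq]
    _ = _ := by rw [integral_cos_sq]; ring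

theorem sqrt_two_div_two_sq : (√2 / 2) ^ 2 = 1 / 2 := by
  rw [div_pow, sq_sqrt zero_le_two]; norm_num

theorem integral_id_sub_sqrt_one_sub_sq :
    ∫ y in √2 / 2..1, (y - √(1 - y ^ 2)) = (4 - π) / 8 := by
  have hpi := pi_pos
  have hsqrt := integral_sqrt_one_sub_sq_sin (a := π / 4) (b := π / 2) ⟨by linarith, by linarith⟩
    ⟨by linarith, le_rfl⟩
  rw [sin_pi_div_four, cos_pi_div_four, sin_pi_div_two, cos_pi_div_two] at hsqrt
  rw [intervalIntegral.integral_sub (continuous_id'.intervalIntegrable _ _)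
    ((by fun_prop : Continuous fun y : ℝ => √(1 - y ^ 2)).intervalIntegrable _ _), integral_id,
    hsqrt]
  nlinarith [sqrt_two_div_two_sq]

theorem sqrt_one_sub_sq_le_self {y : ℝ} (hy : √2 / 2 ≤ y) : √(1 - y ^ 2) ≤ y := by
  have hy0 : 0 ≤ y := (by positivity : (0 : ℝ) ≤ √2 / 2).trans hy
  have : (√2 / 2) ^ 2 ≤ y ^ 2 := pow_le_pow_left₀ (by positivity) hy 2
  exact sqrt_le_iff.2 ⟨hy0, by linarith [sqrt_two_div_two_sq]⟩

theorem acute_region_eq_setOf_fst_mem_Ioc :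
    {p : ℝ × ℝ | 0 < p.1 ∧ p.1 ≤ p.2 ∧ p.2 ≤ 1 ∧ p.1 ^ 2 + p.2 ^ 2 > 1} =
      {p : ℝ × ℝ | p.2 ∈ Ioc (√2 / 2) 1 ∧ p.1 ∈ Ioc (√(1 - p.2 ^ 2)) p.2} := by
  ext ⟨x, y⟩
  simp only [mem_ofPred_eq, mem_Ioc]
  constructor
  · rintro ⟨hx, hxy, hy, hxy2⟩
    have hy2 : (√2 / 2) ^ 2 < y ^ 2 := by nlinarith [sqrt_two_div_two_sq]
    refine ⟨⟨lt_of_pow_lt_pow_left₀ 2 (hx.trans_le hxy).le hy2, hy⟩, ?_, hxy⟩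
    rw [sqrt_lt' hx]
    linarith
  · rintro ⟨⟨-, hy⟩, hsx, hxy⟩
    have hx : 0 < x := (sqrt_nonneg _).trans_lt hsx
    rw [sqrt_lt' hx] at hsx
    exact ⟨hx, hxy, hy, by linarith⟩

theorem dhar_sinha_acute_region_area :
    volume {p : ℝ × ℝ | 0 < p.1 ∧ p.1 ≤ p.2 ∧ p.2 ≤ 1 ∧
        p.1 ^ 2 + p.2 ^ 2 > 1} = ENNReal.ofReal ((4 - π) / 8) ∧
    (4 - π) / 8 < (π - 2) / 8 := by
  have hc : √2 / 2 ≤ 1 := by nlinarith [sqrt_two_div_two_sq]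
  have hnonneg : ∀ᵐ y ∂volume.restrict (Ioc (√2 / 2) 1), 0 ≤ y - √(1 - y ^ 2) :=
    (ae_restrict_iff' measurableSet_Ioc).2 <| ae_of_all _ fun y hy =>
      sub_nonneg.2 (sqrt_one_sub_sq_le_self hy.1.le)
  refine ⟨?_, by linarith [pi_gt_three]⟩
  rw [acute_region_eq_setOf_fst_mem_Ioc,
    volume_setOf_fst_mem_Ioc (f := fun y => √(1 - y ^ 2)) (g := fun y => y) measurableSet_Ioc
      (by fun_prop) measurable_id',
    ← ofReal_integral_eq_lintegral_ofReal
      (by fun_prop : Continuous fun y => y - √(1 - y ^ 2)).integrableOn_Ioc hnonneg,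
    ← intervalIntegral.integral_of_le hc, integral_id_sub_sqrt_one_sub_sq]
end
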